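/- arXiv:1804.09815 — 2 statements merged into one kernel-verified Lean document; each statement's English description precedes it below -/
import Mathlib

section
/- For every μ ∈ ℝ and every x ≥ 0 the function (t,y) ↦ ρ_μ(t,x,y) is square integrable on (0,1] × ℝ_{≥0}, i.e. ∫_0^1 ∫_0^∞ ρ_μ(t,x,y)² dy dt < ∞. -/
open MeasureTheory Real

/-- Complementary error function: `erfc x = (2/√π) ∫_x^∞ e^{-s²} ds`. -/
noncomputable def erfc (x : ℝ) : ℝ :=
  (2 / Real.sqrt π) * ∫ s in Set.Ioi x, Real.exp (-s ^ 2)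

/-- Robin heat kernel `ρ_μ(t,x,y)`. -/
noncomputable def robinKernel (μ t x y : ℝ) : ℝ :=
  (1 / Real.sqrt (2 * π * t)) *
      (Real.exp (-(y - x) ^ 2 / (2 * t)) + Real.exp (-(y + x) ^ 2 / (2 * t))) -
    μ * Real.exp (μ * (y + x) + μ ^ 2 * t / 2) *
      erfc ((y + x) / Real.sqrt (2 * t) + μ * Real.sqrt (t / 2))

/-!
The Robin kernel is the Neumann kernel `p_t(y - x) + p_t(y + x)` (two Gaussian densities of
variance `t`) minus an erfc term, and it suffices to put each piece in `L²`. A Gaussian density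
satisfies `p_t ^ 2 = (4πt)^{-1/2} p_{t/2}`, so `∫ p_t(y)² dy = (4πt)^{-1/2}`, which is
integrable on `(0, 1]`. For the erfc term, when `μ ≥ 0` the bound `erfc z ≤ 2 e^{-z²}`
(`z ≥ 0`) and completing the square turn it into at most
`2μ e^{-(y+x)²/(2t)} ≤ 2μ √(2π) p_t(y + x)`; when `μ < 0` simply `erfc ≤ 2` bounds it by
`C e^{μy}`, which is square integrable on `y ≥ 0`.
-/

open Set ProbabilityTheory
open scoped NNReal

lemma integrable_exp_neg_sq : Integrable (fun s : ℝ => exp (-s ^ 2)) := by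
  simpa using integrable_exp_neg_mul_sq one_pos

lemma setIntegral_exp_neg_sq_sub_le (c : ℝ) (S : Set ℝ) :
    ∫ s in S, exp (-(s - c) ^ 2) ≤ √π := by
  calc ∫ s in S, exp (-(s - c) ^ 2)
      ≤ ∫ s, exp (-(s - c) ^ 2) :=
        setIntegral_le_integral (integrable_exp_neg_sq.comp_sub_right c)
          (ae_of_all _ fun s => (exp_pos _).le)
    _ = √π := by
        rw [integral_sub_right_eq_self (fun s => exp (-s ^ 2)) c]
        simpa using integral_gaussian 1

lemma erfc_nonneg (z : ℝ) : 0 ≤ erfc z :=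
  mul_nonneg (by positivity) (setIntegral_nonneg measurableSet_Ioi fun s _ => (exp_pos _).le)

lemma erfc_le_two (z : ℝ) : erfc z ≤ 2 := by
  have h := setIntegral_exp_neg_sq_sub_le 0 (Ioi z)
  simp only [sub_zero] at h
  calc erfc z ≤ 2 / √π * √π := mul_le_mul_of_nonneg_left h (by positivity)
    _ = 2 := div_mul_cancel₀ 2 (sqrt_pos.2 pi_pos).ne'

lemma erfc_le_two_mul_exp_neg_sq {z : ℝ} (hz : 0 ≤ z) : erfc z ≤ 2 * exp (-z ^ 2) := by
  -- for `s ≥ z ≥ 0`, `s ^ 2 ≥ z ^ 2 + (s - z) ^ 2`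
  have hle :
      ∫ s in Ioi z, exp (-s ^ 2) ≤ ∫ s in Ioi z, exp (-z ^ 2) * exp (-(s - z) ^ 2) := by
    refine setIntegral_mono_on integrable_exp_neg_sq.integrableOn
      ((integrable_exp_neg_sq.comp_sub_right z).const_mul _).integrableOn measurableSet_Ioi
      fun s hs => ?_
    rw [← exp_add, exp_le_exp]
    nlinarith [mem_Ioi.1 hs]
  rw [integral_const_mul] at hle
  calc erfc z ≤ 2 / √π * (exp (-z ^ 2) * √π) :=
        mul_le_mul_of_nonneg_left (hle.trans (by gcongr; exact setIntegral_exp_neg_sq_sub_le z _))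
          (by positivity)
    _ = 2 * exp (-z ^ 2) := by field_simp

lemma erfc_antitone : Antitone erfc := fun a b hab =>
  mul_le_mul_of_nonneg_left (setIntegral_mono_set integrable_exp_neg_sq.integrableOn
    (ae_of_all _ fun s => (exp_pos _).le) (ae_of_all _ (Ioi_subset_Ioi hab))) (by positivity)

lemma gaussianPDFReal_sq (m : ℝ) {v : ℝ≥0} (hv : v ≠ 0) (y : ℝ) :
    gaussianPDFReal m v y ^ 2 = (√(4 * π * v))⁻¹ * gaussianPDFReal m (v / 2) y := by
  have hv' : (0 : ℝ) < v := by positivity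
  simp only [gaussianPDFReal, NNReal.coe_div, NNReal.coe_ofNat]
  rw [mul_pow, inv_pow, sq_sqrt (by positivity), ← mul_assoc, ← mul_inv,
    ← sqrt_mul (by positivity),
    show 4 * π * v * (2 * π * (v / 2)) = (2 * π * v) ^ 2 by ring, sqrt_sq (by positivity),
    sq, ← exp_add]
  congr 2
  field_simp
  ring

lemma integrable_gaussianPDFReal_sq (m : ℝ) (v : ℝ≥0) :
    Integrable (fun y => gaussianPDFReal m v y ^ 2) := by
  rcases eq_or_ne v 0 with rfl | hv
  · simp
  · simp_rw [gaussianPDFReal_sq m hv]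
    exact (integrable_gaussianPDFReal _ _).const_mul _

lemma integral_gaussianPDFReal_sq (m : ℝ) {v : ℝ≥0} (hv : v ≠ 0) :
    ∫ y, gaussianPDFReal m v y ^ 2 = (√(4 * π * v))⁻¹ := by
  simp_rw [gaussianPDFReal_sq m hv, integral_const_mul,
    integral_gaussianPDFReal_eq_one m (div_ne_zero hv two_ne_zero), mul_one]

lemma integrableOn_inv_sqrt_mul_Ioc (c b : ℝ) :
    IntegrableOn (fun t => (√(c * t))⁻¹) (Ioc 0 b) := by
  have hrpow : IntegrableOn (fun t : ℝ => t ^ (-(1 / 2) : ℝ)) (Ioc 0 b) := by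
    rcases le_total 0 b with hb | hb
    · have := intervalIntegral.intervalIntegrable_rpow' (show (-1 : ℝ) < -(1 / 2) by norm_num)
        (a := 0) (b := b)
      rwa [intervalIntegrable_iff, uIoc_of_le hb] at this
    · simp [Ioc_eq_empty_of_le hb]
  refine IntegrableOn.congr_fun (hrpow.const_mul (√c)⁻¹) (fun t ht => ?_) measurableSet_Ioc
  rw [sqrt_mul' c (le_of_lt ht.1), mul_inv, rpow_neg (le_of_lt ht.1), ← sqrt_eq_rpow]

lemma measurable_gaussianPDFReal_toNNReal (m : ℝ) :
    Measurable (fun p : ℝ × ℝ => gaussianPDFReal m p.1.toNNReal p.2) := by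
  unfold gaussianPDFReal
  fun_prop

lemma memLp_two_gaussianPDFReal_toNNReal (m b : ℝ) (s : Set ℝ) :
    MemLp (fun p : ℝ × ℝ => gaussianPDFReal m p.1.toNNReal p.2) 2
      (volume.restrict (Ioc 0 b ×ˢ s)) := by
  refine MemLp.mono_measure (Measure.restrict_mono (prod_mono le_rfl (subset_univ s)) le_rfl) ?_
  have hmeas := measurable_gaussianPDFReal_toNNReal m
  rw [memLp_two_iff_integrable_sq hmeas.aestronglyMeasurable, Measure.volume_eq_prod,
    ← Measure.prod_restrict, Measure.restrict_univ]
  rw [integrable_prod_iff (hmeas.pow_const 2).aestronglyMeasurable]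
  refine ⟨ae_of_all _ fun t => integrable_gaussianPDFReal_sq m t.toNNReal, ?_⟩
  refine IntegrableOn.congr_fun (integrableOn_inv_sqrt_mul_Ioc (4 * π) b) (fun t ht => ?_)
    measurableSet_Ioc
  simp only [norm_pow, Real.norm_eq_abs, sq_abs]
  rw [integral_gaussianPDFReal_sq m (Real.toNNReal_pos.2 ht.1).ne', Real.coe_toNNReal _ ht.1.le]

noncomputable def robinCorrection (μ t x y : ℝ) : ℝ :=
  μ * exp (μ * (y + x) + μ ^ 2 * t / 2) * erfc ((y + x) / √(2 * t) + μ * √(t / 2))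

-- For `t ≤ 0` both sides vanish: `√` of a negative number and `(0 : ℝ)⁻¹` are `0`.
lemma robinKernel_eq (μ t x y : ℝ) :
    robinKernel μ t x y = gaussianPDFReal x t.toNNReal y + gaussianPDFReal (-x) t.toNNReal y
      - robinCorrection μ t x y := by
  rw [robinKernel, robinCorrection, gaussianPDFReal, gaussianPDFReal, sub_neg_eq_add, one_div]
  rcases le_or_gt t 0 with ht | ht
  · rw [Real.toNNReal_of_nonpos ht, sqrt_eq_zero'.2 (by nlinarith [pi_pos])]
    simp
  · rw [Real.coe_toNNReal _ ht.le]
    ring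

lemma measurable_robinCorrection (μ x : ℝ) :
    Measurable (fun p : ℝ × ℝ => robinCorrection μ p.1 x p.2) := by
  have := erfc_antitone.measurable
  unfold robinCorrection
  fun_prop

lemma sq_div_sqrt_add_mul_sqrt (μ a : ℝ) {t : ℝ} (ht : 0 < t) :
    (a / √(2 * t) + μ * √(t / 2)) ^ 2 = a ^ 2 / (2 * t) + μ * a + μ ^ 2 * t / 2 := by
  have hs : √(t / 2) = √(2 * t) / 2 := by
    rw [show t / 2 = 2 * t / 2 ^ 2 by ring, sqrt_div' _ (by positivity), sqrt_sq zero_le_two]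
  obtain ⟨s, hs_def, hs_sq, hs_pos⟩ : ∃ s, √(2 * t) = s ∧ s ^ 2 = 2 * t ∧ 0 < s :=
    ⟨_, rfl, sq_sqrt (by positivity), sqrt_pos.2 (by positivity)⟩
  rw [hs, hs_def, show t = s ^ 2 / 2 by linarith]
  field_simp
  ring

lemma abs_robinCorrection_le_of_neg {μ t x : ℝ} (y : ℝ) (hμ : μ < 0) (ht : t ≤ 1)
    (hx : 0 ≤ x) :
    |robinCorrection μ t x y| ≤ 2 * |μ| * exp (μ ^ 2 / 2) * exp (μ * y) := by
  set z := (y + x) / √(2 * t) + μ * √(t / 2)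
  have hexp : exp (μ * (y + x) + μ ^ 2 * t / 2) ≤ exp (μ ^ 2 / 2) * exp (μ * y) := by
    rw [← exp_add, exp_le_exp]
    nlinarith [mul_nonpos_of_nonpos_of_nonneg hμ.le hx, sq_nonneg μ]
  rw [robinCorrection, abs_mul, abs_mul, abs_of_pos (exp_pos _), abs_of_nonneg (erfc_nonneg z)]
  calc |μ| * exp (μ * (y + x) + μ ^ 2 * t / 2) * erfc z
      ≤ |μ| * (exp (μ ^ 2 / 2) * exp (μ * y)) * 2 := by
        gcongr
        · exact erfc_nonneg z
        · exact erfc_le_two z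
    _ = 2 * |μ| * exp (μ ^ 2 / 2) * exp (μ * y) := by ring

lemma abs_robinCorrection_le_of_nonneg {μ t x y : ℝ} (hμ : 0 ≤ μ) (ht : 0 < t)
    (hxy : 0 ≤ y + x) :
    |robinCorrection μ t x y| ≤ 2 * μ * exp (-(y + x) ^ 2 / (2 * t)) := by
  set z := (y + x) / √(2 * t) + μ * √(t / 2)
  have hz : 0 ≤ z := by positivity
  rw [robinCorrection, abs_mul, abs_mul, abs_of_pos (exp_pos _), abs_of_nonneg (erfc_nonneg z),
    abs_of_nonneg hμ]
  calc μ * exp (μ * (y + x) + μ ^ 2 * t / 2) * erfc z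
      ≤ μ * exp (μ * (y + x) + μ ^ 2 * t / 2) * (2 * exp (-z ^ 2)) := by
        gcongr
        exact erfc_le_two_mul_exp_neg_sq hz
    _ = 2 * μ * exp (μ * (y + x) + μ ^ 2 * t / 2 - z ^ 2) := by
        rw [sub_eq_add_neg, exp_add (μ * (y + x) + μ ^ 2 * t / 2)]; ring
    _ = 2 * μ * exp (-(y + x) ^ 2 / (2 * t)) := by
        rw [sq_div_sqrt_add_mul_sqrt μ _ ht]; ring_nf

lemma exp_neg_sq_div_eq_mul_gaussianPDFReal (m y : ℝ) {t : ℝ} (ht : 0 < t) :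
    exp (-(y - m) ^ 2 / (2 * t)) = √(2 * π * t) * gaussianPDFReal m t.toNNReal y := by
  have : 0 < √(2 * π * t) := sqrt_pos.2 (by positivity)
  rw [gaussianPDFReal, Real.coe_toNNReal _ ht.le, ← mul_assoc, mul_inv_cancel₀ this.ne',
    one_mul]

lemma memLp_two_exp_mul_Ici {c : ℝ} (hc : c < 0) (a : ℝ) :
    MemLp (fun y : ℝ => exp (c * y)) 2 (volume.restrict (Ici a)) := by
  refine (memLp_two_iff_integrable_sq (by fun_prop)).2 ?_
  change IntegrableOn _ _ _
  rw [integrableOn_Ici_iff_integrableOn_Ioi]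
  simpa [← exp_nat_mul, ← mul_assoc] using
    exp_neg_integrableOn_Ioi a (show 0 < -(2 * c) by linarith)

lemma memLp_two_robinCorrection (μ : ℝ) {x : ℝ} (hx : 0 ≤ x) :
    MemLp (fun p : ℝ × ℝ => robinCorrection μ p.1 x p.2) 2
      (volume.restrict (Ioc 0 1 ×ˢ Ici 0)) := by
  have hmeas : AEStronglyMeasurable (fun p : ℝ × ℝ => robinCorrection μ p.1 x p.2)
      (volume.restrict (Ioc 0 1 ×ˢ Ici 0)) :=
    (measurable_robinCorrection μ x).aestronglyMeasurable
  have hdom :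
      ∀ᵐ p ∂volume.restrict (Ioc (0 : ℝ) 1 ×ˢ Ici (0 : ℝ)), p ∈ Ioc 0 1 ×ˢ Ici 0 :=
    ae_restrict_mem (measurableSet_Ioc.prod measurableSet_Ici)
  rcases lt_or_ge μ 0 with hμ | hμ
  · have hexp :
        MemLp (fun p : ℝ × ℝ => exp (μ * p.2)) 2 (volume.restrict (Ioc 0 1 ×ˢ Ici 0)) := by
      rw [Measure.volume_eq_prod, ← Measure.prod_restrict]
      exact (memLp_two_exp_mul_Ici hμ 0).comp_snd _
    refine hexp.of_le_mul (c := 2 * |μ| * exp (μ ^ 2 / 2)) hmeas ?_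
    filter_upwards [hdom] with p hp
    rw [norm_of_nonneg (exp_pos _).le, norm_eq_abs]
    exact abs_robinCorrection_le_of_neg p.2 hμ hp.1.2 hx
  · refine (memLp_two_gaussianPDFReal_toNNReal (-x) 1 _).of_le_mul (c := 2 * μ * √(2 * π))
      hmeas ?_
    filter_upwards [hdom] with ⟨t, y⟩ ⟨⟨ht, ht1⟩, hy⟩
    rw [norm_eq_abs, norm_of_nonneg (gaussianPDFReal_nonneg _ _ _)]
    calc |robinCorrection μ t x y| ≤ 2 * μ * exp (-(y + x) ^ 2 / (2 * t)) :=
          abs_robinCorrection_le_of_nonneg hμ ht (add_nonneg hy hx)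
      _ = 2 * μ * (√(2 * π * t) * gaussianPDFReal (-x) t.toNNReal y) := by
          rw [← exp_neg_sq_div_eq_mul_gaussianPDFReal (-x) y ht, sub_neg_eq_add]
      _ ≤ 2 * μ * √(2 * π) * gaussianPDFReal (-x) t.toNNReal y := by
          rw [← mul_assoc]
          gcongr 2 * μ * ?_ * _
          · exact gaussianPDFReal_nonneg _ _ _
          · exact sqrt_le_sqrt (by nlinarith [pi_pos])

/-- For every `μ ∈ ℝ` and every `x ≥ 0`, the function `(t,y) ↦ ρ_μ(t,x,y)` is square
integrable on `(0,1] × ℝ_{≥0}`, i.e. `(t,y) ↦ ρ_μ(t,x,y)²` is integrable there. -/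
theorem robinKernel_sq_integrable (μ x : ℝ) (hx : 0 ≤ x) :
    IntegrableOn (fun p : ℝ × ℝ => (robinKernel μ p.1 x p.2) ^ 2)
      (Set.Ioc (0 : ℝ) 1 ×ˢ Set.Ici (0 : ℝ)) (volume : Measure (ℝ × ℝ)) := by
  have hK : MemLp (fun p : ℝ × ℝ => robinKernel μ p.1 x p.2) 2
      (volume.restrict (Ioc 0 1 ×ˢ Ici 0)) := by
    simp_rw [robinKernel_eq]
    exact ((memLp_two_gaussianPDFReal_toNNReal x 1 _).add
      (memLp_two_gaussianPDFReal_toNNReal (-x) 1 _)).sub (memLp_two_robinCorrection μ hx)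
  exact (memLp_two_iff_integrable_sq hK.1).1 hK
end

section
/- For all μ ∈ ℝ, t > 0 and x, y ≥ 0 the Robin heat kernel has the integral representation ρ_μ(t,x,y) = (1/√(2πt))·(exp(−(y−x)²/(2t)) − exp(−(y+x)²/(2t))) + (2/√(2πt³)) · ∫_0^∞ e^{−μs} (y+x+s) e^{−(y+x+s)²/(2t)} ds. -/
open MeasureTheory Real

/-! Completing the square, `e^{-μs} e^{-(a+s)²/(2t)} = e^{μa+μ²t/2} e^{-(s+c)²/(2t)}` with
`c = a + μt`, and writing `a + s = (s + c) - μt` split the integral into a first moment of a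
Gaussian over a half-line, which has the explicit antiderivative `-t e^{-u²/(2t)}`, and a Gaussian
tail, which is an `erfc`. -/

open Set Filter Topology

theorem setIntegral_Ioi_comp_add_right {E : Type*} [NormedAddCommGroup E] [NormedSpace ℝ E]
    (f : ℝ → E) (a c : ℝ) : ∫ x in Ioi a, f (x + c) = ∫ x in Ioi (a + c), f x := by
  have := (measurePreserving_add_right volume c).setIntegral_preimage_emb
    (measurableEmbedding_addRight c) f (Ioi (a + c))
  simpa using this

theorem exp_neg_sq_div_eq_exp_neg_mul_sq (t u : ℝ) :
    exp (-u ^ 2 / (2 * t)) = exp (-(1 / (2 * t)) * u ^ 2) := by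
  ring_nf

theorem integrable_exp_neg_sq_div {t : ℝ} (ht : 0 < t) :
    Integrable (fun u : ℝ => exp (-u ^ 2 / (2 * t))) := by
  simpa only [exp_neg_sq_div_eq_exp_neg_mul_sq] using
    integrable_exp_neg_mul_sq (b := 1 / (2 * t)) (by positivity)

theorem integrable_mul_exp_neg_sq_div {t : ℝ} (ht : 0 < t) :
    Integrable (fun u : ℝ => u * exp (-u ^ 2 / (2 * t))) := by
  simpa only [exp_neg_sq_div_eq_exp_neg_mul_sq] using
    integrable_mul_exp_neg_mul_sq (b := 1 / (2 * t)) (by positivity)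

theorem integral_Ioi_exp_neg_sq_div {t : ℝ} (ht : 0 < t) (c : ℝ) :
    ∫ u in Ioi c, exp (-u ^ 2 / (2 * t)) = √(2 * t) * √π / 2 * erfc (c / √(2 * t)) := by
  have hσ : 0 < √(2 * t) := by positivity
  have hscale : ∀ u : ℝ, exp (-u ^ 2 / (2 * t)) = exp (-((√(2 * t))⁻¹ * u) ^ 2) := fun u => by
    rw [mul_pow, inv_pow, sq_sqrt (by positivity)]
    ring_nf
  simp_rw [hscale]
  rw [integral_comp_mul_left_Ioi (fun v => exp (-v ^ 2)) c (inv_pos.mpr hσ), inv_inv,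
    smul_eq_mul, erfc, inv_mul_eq_div]
  field_simp

theorem integral_Ioi_mul_exp_neg_sq_div {t : ℝ} (ht : 0 < t) (c : ℝ) :
    ∫ u in Ioi c, u * exp (-u ^ 2 / (2 * t)) = t * exp (-c ^ 2 / (2 * t)) := by
  have hderiv : ∀ u ∈ Ici c,
      HasDerivAt (fun u => -t * exp (-u ^ 2 / (2 * t))) (u * exp (-u ^ 2 / (2 * t))) u := by
    intro u _
    have hexponent : HasDerivAt (fun u => -u ^ 2 / (2 * t)) (-u / t) u :=
      ((hasDerivAt_pow 2 u).neg.div_const (2 * t)).congr_deriv (by field_simp; ring)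
    exact (hexponent.exp.const_mul (-t)).congr_deriv (by field_simp)
  have hlim : Tendsto (fun u : ℝ => -t * exp (-u ^ 2 / (2 * t))) atTop (𝓝 0) := by
    have hexp : Tendsto (fun u : ℝ => -u ^ 2 / (2 * t)) atTop atBot :=
      (tendsto_neg_atTop_atBot.comp (tendsto_pow_atTop two_ne_zero)).atBot_div_const
        (by positivity)
    simpa using (tendsto_exp_atBot.comp hexp).const_mul (-t)
  rw [integral_Ioi_of_hasDerivAt_of_tendsto' hderiv
    (integrable_mul_exp_neg_sq_div ht).integrableOn hlim]
  ring

theorem exp_neg_mul_mul_exp_neg_sq_div (μ a s : ℝ) {t : ℝ} (ht : t ≠ 0) :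
    exp (-μ * s) * exp (-(a + s) ^ 2 / (2 * t)) =
      exp (μ * a + μ ^ 2 * t / 2) * exp (-(s + (a + μ * t)) ^ 2 / (2 * t)) := by
  rw [← exp_add, ← exp_add]
  congr 1
  field_simp
  ring

theorem integral_Ioi_exp_neg_mul_mul_add_mul_exp_neg_sq_div (μ a : ℝ) {t : ℝ} (ht : 0 < t) :
    ∫ s in Ioi 0, exp (-μ * s) * (a + s) * exp (-(a + s) ^ 2 / (2 * t)) =
      t * exp (-a ^ 2 / (2 * t)) - μ * t * exp (μ * a + μ ^ 2 * t / 2) *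
        (√(2 * t) * √π / 2 * erfc ((a + μ * t) / √(2 * t))) := by
  set c := a + μ * t
  set M := exp (μ * a + μ ^ 2 * t / 2)
  have hcomplete : ∀ s : ℝ, exp (-μ * s) * (a + s) * exp (-(a + s) ^ 2 / (2 * t)) =
      M * ((s + c) * exp (-(s + c) ^ 2 / (2 * t)) - μ * t * exp (-(s + c) ^ 2 / (2 * t))) := by
    intro s
    rw [mul_right_comm, exp_neg_mul_mul_exp_neg_sq_div μ a s ht.ne']
    ring
  have hM : M * exp (-c ^ 2 / (2 * t)) = exp (-a ^ 2 / (2 * t)) := by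
    rw [← exp_add]
    congr 1
    field_simp
    ring
  simp_rw [hcomplete]
  rw [integral_const_mul,
    setIntegral_Ioi_comp_add_right
      (fun u => u * exp (-u ^ 2 / (2 * t)) - μ * t * exp (-u ^ 2 / (2 * t))),
    zero_add, integral_sub (integrable_mul_exp_neg_sq_div ht).integrableOn
      ((integrable_exp_neg_sq_div ht).const_mul _).integrableOn, integral_const_mul,
    integral_Ioi_mul_exp_neg_sq_div ht, integral_Ioi_exp_neg_sq_div ht, ← hM]
  ring

theorem robinKernel_integral_repr_general (μ t x y : ℝ) (ht : 0 < t) :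
    robinKernel μ t x y =
      (1 / Real.sqrt (2 * π * t)) *
          (Real.exp (-(y - x) ^ 2 / (2 * t)) - Real.exp (-(y + x) ^ 2 / (2 * t))) +
        (2 / Real.sqrt (2 * π * t ^ 3)) *
          ∫ s in Set.Ioi (0 : ℝ),
            Real.exp (-μ * s) * (y + x + s) * Real.exp (-(y + x + s) ^ 2 / (2 * t)) := by
  have hσ : 0 < √(2 * t) := by positivity
  have harg : (y + x) / √(2 * t) + μ * √(t / 2) = (y + x + μ * t) / √(2 * t) := by
    rw [eq_div_iff hσ.ne', add_mul, div_mul_cancel₀ _ hσ.ne', mul_assoc,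
      ← sqrt_mul (by positivity), show t / 2 * (2 * t) = t ^ 2 by ring, sqrt_sq ht.le]
  have hsqrt_cube : √(2 * π * t ^ 3) = t * (√π * √(2 * t)) := by
    rw [show 2 * π * t ^ 3 = π * (2 * t) * t ^ 2 by ring, sqrt_mul (by positivity),
      sqrt_sq ht.le, sqrt_mul pi_pos.le]
    ring
  have hsqrt : √(2 * π * t) = √π * √(2 * t) := by
    rw [show 2 * π * t = π * (2 * t) by ring, sqrt_mul pi_pos.le]
  rw [robinKernel, integral_Ioi_exp_neg_mul_mul_add_mul_exp_neg_sq_div μ (y + x) ht, harg,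
    hsqrt_cube, hsqrt]
  field_simp
  ring

/-- Integral representation of the Robin heat kernel: for `μ ∈ ℝ`, `t > 0`, `x, y ≥ 0`,
`ρ_μ(t,x,y) = (1/√(2πt))(e^{-(y-x)²/(2t)} - e^{-(y+x)²/(2t)})
  + (2/√(2πt³)) ∫_0^∞ e^{-μs}(y+x+s) e^{-(y+x+s)²/(2t)} ds`. -/
theorem robinKernel_integral_repr (μ t x y : ℝ) (ht : 0 < t) (hx : 0 ≤ x) (hy : 0 ≤ y) :
    robinKernel μ t x y =
      (1 / Real.sqrt (2 * π * t)) *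
          (Real.exp (-(y - x) ^ 2 / (2 * t)) - Real.exp (-(y + x) ^ 2 / (2 * t))) +
        (2 / Real.sqrt (2 * π * t ^ 3)) *
          ∫ s in Set.Ioi (0 : ℝ),
            Real.exp (-μ * s) * (y + x + s) * Real.exp (-(y + x + s) ^ 2 / (2 * t)) :=
  robinKernel_integral_repr_general μ t x y ht
end
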